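/- arXiv:1907.06054 — 4 statements merged into one kernel-verified Lean document; each statement's English description precedes it below -/
import Mathlib

section
/- For every δ₀ ∈ (0,1) there exists a constant c > 0 such that the following holds for all integers n, N, s with 2 ≤ s and s/N < 1/5: if A is an n×N random matrix with i.i.d. standard Gaussian entries, Φ = A/√n, and P(δ_s(Φ) ≤ δ₀) ≥ 1/2, then n ≥ c·s·log(N/s). In other words, the minimal number of Gaussian random measurements enforcing the restricted isometry property of order s with constant δ₀ is Ω(s·log(N/s)). -/
/-
Only the existence of a single matrix `Φ` with `δ_s(Φ) ≤ δ₀ < 1` matters. Let `t = ⌊s/2⌋`.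
Splitting `[N]` into `t` blocks of size `b = ⌊N/t⌋`, a Gilbert–Varshamov code `Fin t → Fin b`
yields at least `(b/4)^⌈t/2⌉` sets of size `t` meeting pairwise in at most `t/2` points. Their
indicator vectors and pairwise differences are `s`-sparse, so `Φ` maps them to points of norm
at most `√(2t)` that are pairwise `√((1 - δ₀) t)` apart. Comparing volumes of balls in `ℝⁿ`
bounds their number by `(2√2/√(1 - δ₀) + 1)ⁿ`, and taking logarithms gives
`s log(N/s) ≤ 10 log(2√2/√(1 - δ₀) + 1) n`.
-/

open MeasureTheory ProbabilityTheory

/-- Law of an `n × N` matrix with i.i.d. standard Gaussian entries. -/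
noncomputable def gaussianMatrixMeasure (n N : ℕ) : Measure (Fin n → Fin N → ℝ) :=
  Measure.pi fun _ => Measure.pi fun _ => gaussianReal 0 1

/-- The set Ψ_s of `s`-sparse unit vectors in `ℝ^N`. -/
def sparseUnitVecs (N s : ℕ) : Set (Fin N → ℝ) :=
  {x | (∑ j, x j ^ 2) = 1 ∧ (Finset.univ.filter fun j => x j ≠ 0).card ≤ s}

/-- `‖A x‖²` for `A : ℝ^{n×N}`, `x : ℝ^N`. -/
noncomputable def normSqMulVec {n N : ℕ} (A : Fin n → Fin N → ℝ) (x : Fin N → ℝ) : ℝ :=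
  ∑ i, (∑ j, A i j * x j) ^ 2

/-- The upper RIP constant `δ_s^+(A) = sup_{x ∈ Ψ_s} ‖Ax‖² − 1`. -/
noncomputable def ripPlus (n N s : ℕ) (A : Fin n → Fin N → ℝ) : ℝ :=
  sSup (normSqMulVec A '' sparseUnitVecs N s) - 1

/-- The lower RIP constant `δ_s^-(A) = 1 − inf_{x ∈ Ψ_s} ‖Ax‖²`. -/
noncomputable def ripMinus (n N s : ℕ) (A : Fin n → Fin N → ℝ) : ℝ :=
  1 - sInf (normSqMulVec A '' sparseUnitVecs N s)

/-- The RIP constant `δ_s = max(δ_s^+, δ_s^-)`. -/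
noncomputable def ripConst (n N s : ℕ) (A : Fin n → Fin N → ℝ) : ℝ :=
  max (ripPlus n N s A) (ripMinus n N s A)

open Finset Metric Module Matrix

section Packing

variable {E : Type*} [NormedAddCommGroup E] [NormedSpace ℝ E] [FiniteDimensional ℝ E]
  [MeasurableSpace E] [BorelSpace E]

-- The balls of radius `r / 2` around the points are disjoint and lie in `ball 0 (R + r / 2)`.
theorem card_le_of_pairwise_le_dist {ι : Type*} {F : Finset ι} {y : ι → E} {r R : ℝ}
    (hr : 0 < r) (hR : 0 ≤ R) (hsep : (F : Set ι).Pairwise fun f g => r ≤ dist (y f) (y g))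
    (hnorm : ∀ f ∈ F, ‖y f‖ ≤ R) :
    (#F : ℝ) ≤ (2 * R / r + 1) ^ finrank ℝ E := by
  set μ : Measure E := Measure.addHaar
  have hdisj : (F : Set ι).PairwiseDisjoint fun f => ball (y f) (r / 2) :=
    fun f hf g hg hfg => ball_disjoint_ball (by linarith [hsep hf hg hfg])
  have hsub : (⋃ f ∈ F, ball (y f) (r / 2)) ⊆ ball 0 (R + r / 2) := by
    simp only [Set.iUnion_subset_iff]
    intro f hf z hz
    rw [mem_ball, dist_zero_right]
    calc ‖z‖ ≤ ‖z - y f‖ + ‖y f‖ := norm_le_norm_sub_add z (y f)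
      _ < r / 2 + R := add_lt_add_of_lt_of_le (mem_ball_iff_norm.mp hz) (hnorm f hf)
      _ = R + r / 2 := add_comm _ _
  have hvol : ENNReal.ofReal (#F * (r / 2) ^ finrank ℝ E) * μ (ball 0 1)
      ≤ ENNReal.ofReal ((R + r / 2) ^ finrank ℝ E) * μ (ball 0 1) :=
    calc ENNReal.ofReal (#F * (r / 2) ^ finrank ℝ E) * μ (ball 0 1)
        = ∑ f ∈ F, μ (ball (y f) (r / 2)) := by
          simp only [μ.addHaar_ball_of_pos _ (half_pos hr), sum_const, nsmul_eq_mul,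
            ENNReal.ofReal_mul (Nat.cast_nonneg _), ENNReal.ofReal_natCast, mul_assoc]
      _ = μ (⋃ f ∈ F, ball (y f) (r / 2)) :=
          (measure_biUnion_finset hdisj fun _ _ => measurableSet_ball).symm
      _ ≤ μ (ball 0 (R + r / 2)) := measure_mono hsub
      _ = ENNReal.ofReal ((R + r / 2) ^ finrank ℝ E) * μ (ball 0 1) :=
          μ.addHaar_ball_of_pos _ (by positivity)
  have hreal : #F * (r / 2) ^ finrank ℝ E ≤ (R + r / 2) ^ finrank ℝ E :=
    (ENNReal.ofReal_le_ofReal_iff (by positivity)).mp <|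
      (ENNReal.mul_le_mul_iff_left (measure_ball_pos μ 0 one_pos).ne'
        measure_ball_lt_top.ne).mp hvol
  calc (#F : ℝ) ≤ (R + r / 2) ^ finrank ℝ E / (r / 2) ^ finrank ℝ E := by
        rwa [le_div_iff₀ (by positivity)]
    _ = (2 * R / r + 1) ^ finrank ℝ E := by
        rw [← div_pow]
        congr 1
        field_simp

end Packing

theorem exists_pairwise_not_rel_card_le {α : Type*} [Fintype α] [DecidableEq α]
    (R : α → α → Prop) [DecidableRel R] (hrefl : ∀ a, R a a) (hsymm : ∀ a b, R a b → R b a)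
    {m : ℕ} (hball : ∀ a, #{b | R a b} ≤ m) :
    ∃ F : Finset α, (F : Set α).Pairwise (fun a b => ¬ R a b) ∧ Fintype.card α ≤ #F * m := by
  have : Std.Symm fun a b => ¬ R a b := ⟨fun a b hab hba => hab (hsymm _ _ hba)⟩
  obtain ⟨F, hFgood, hFmax⟩ := exists_max_image
    {F : Finset α | (F : Set α).Pairwise fun a b => ¬ R a b} card ⟨∅, by simp⟩
  simp only [mem_filter, mem_univ, true_and] at hFgood hFmax
  refine ⟨F, hFgood, ?_⟩
  -- otherwise `F` would not be maximal
  have hcover : ∀ b, ∃ a ∈ F, R a b := by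
    by_contra! hfar
    obtain ⟨b, hb⟩ := hfar
    have hbF : b ∉ F := fun hbF => hb b hbF (hrefl b)
    have := hFmax (insert b F) <| by
      rw [coe_insert, Set.pairwise_insert_of_symm]
      exact ⟨hFgood, fun a ha _ => fun hba => hb a ha (hsymm _ _ hba)⟩
    rw [card_insert_of_notMem hbF] at this
    omega
  calc Fintype.card α = #(univ : Finset α) := card_univ.symm
    _ ≤ #(F.biUnion fun a => {b | R a b}) := card_le_card fun b _ => by
        obtain ⟨a, ha, hab⟩ := hcover b
        exact mem_biUnion.mpr ⟨a, ha, by simpa using hab⟩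
    _ ≤ #F * m := card_biUnion_le_card_mul _ _ _ fun a _ => hball a

theorem card_filter_le_card_filter_eq_le {ι β : Type*} [Fintype ι] [DecidableEq ι] [Fintype β]
    [DecidableEq β] (f : ι → β) (h : ℕ) :
    #{g : ι → β | h ≤ #{i | f i = g i}}
      ≤ (Fintype.card ι).choose h * Fintype.card β ^ (Fintype.card ι - h) := by
  let agreeOn : Finset ι → Finset (ι → β) :=
    fun I => Fintype.piFinset fun i => if i ∈ Iᶜ then univ else {f i}
  have hcover : ({g | h ≤ #{i | f i = g i}} : Finset (ι → β))
      ⊆ (powersetCard h univ).biUnion agreeOn := by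
    intro g hg
    obtain ⟨I, hI, hIcard⟩ := exists_subset_card_eq (mem_filter.mp hg).2
    refine mem_biUnion.mpr ⟨I, mem_powersetCard_univ.mpr hIcard, ?_⟩
    simp only [agreeOn, Fintype.mem_piFinset]
    intro i
    by_cases hi : i ∈ I
    · simpa [hi, eq_comm] using (mem_filter.mp (hI hi)).2
    · simp [hi]
  have hcard : ∀ I ∈ powersetCard h univ,
      #(agreeOn I) = Fintype.card β ^ (Fintype.card ι - h) := by
    intro I hI
    simp only [agreeOn, Fintype.card_piFinset, apply_ite card, card_univ, card_singleton,
      prod_ite_mem, univ_inter, prod_const, card_compl, (mem_powersetCard_univ.mp hI)]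
  calc _ ≤ #((powersetCard h univ).biUnion agreeOn) := card_le_card hcover
    _ ≤ #(powersetCard h (univ : Finset ι)) * Fintype.card β ^ (Fintype.card ι - h) :=
        card_biUnion_le_card_mul _ _ _ fun I hI => (hcard I hI).le
    _ = _ := by rw [card_powersetCard, card_univ]

-- Gilbert–Varshamov bound.
theorem exists_code_pairwise_card_filter_eq_lt {ι β : Type*} [Fintype ι] [DecidableEq ι]
    [Fintype β] [DecidableEq β] [Nonempty β] {h : ℕ} (hh : h ≤ Fintype.card ι) :
    ∃ F : Finset (ι → β), (F : Set (ι → β)).Pairwise (fun f g => #{i | f i = g i} < h) ∧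
      Fintype.card β ^ h ≤ #F * (Fintype.card ι).choose h := by
  obtain ⟨F, hF, hcard⟩ :=
    exists_pairwise_not_rel_card_le (fun f g : ι → β => h ≤ #{i | f i = g i})
    (fun f => by simpa using hh) (fun f g hfg => by simpa only [eq_comm] using hfg)
    (m := (Fintype.card ι).choose h * Fintype.card β ^ (Fintype.card ι - h))
    (card_filter_le_card_filter_eq_le · h)
  refine ⟨F, hF.imp fun f g => not_le.mp, ?_⟩
  rw [Fintype.card_fun, ← Nat.sub_add_cancel hh, pow_add, Nat.sub_add_cancel hh, mul_comm,
    ← mul_assoc] at hcard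
  exact Nat.le_of_mul_le_mul_right hcard (pow_pos Fintype.card_pos _)

-- Block construction: a codeword `f : Fin t → Fin b` becomes the `t`-set `{(i, f i)}` inside
-- `Fin t × Fin b ⊆ Fin N`.
theorem exists_finset_card_eq_pairwise_two_mul_card_inter_le {t b N : ℕ} (htb : t * b ≤ N)
    (hb : 0 < b) :
    ∃ 𝒮 : Finset (Finset (Fin N)), (∀ S ∈ 𝒮, #S = t) ∧
      (𝒮 : Set (Finset (Fin N))).Pairwise (fun S T => 2 * #(S ∩ T) ≤ t) ∧
      ((b : ℝ) / 4) ^ ((t + 1) / 2) ≤ #𝒮 := by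
  have : Nonempty (Fin b) := ⟨⟨0, hb⟩⟩
  obtain ⟨F, hF, hFcard⟩ := exists_code_pairwise_card_filter_eq_lt (ι := Fin t) (β := Fin b)
    (h := (t + 1) / 2) (by simp; omega)
  let e : Fin t × Fin b ↪ Fin N := finProdFinEquiv.toEmbedding.trans (Fin.castLEEmb htb)
  let point (f : Fin t → Fin b) : Fin t ↪ Fin N :=
    ⟨fun i => e (i, f i), fun i j hij => (Prod.ext_iff.mp (e.injective hij)).1⟩
  let graph (f : Fin t → Fin b) : Finset (Fin N) := univ.map (point f)
  have hgraph_inj : Function.Injective graph := fun f g hfg => funext fun i => by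
    obtain ⟨j, -, hj⟩ := mem_map.mp (hfg ▸ mem_map_of_mem _ (mem_univ i) : e (i, f i) ∈ graph g)
    obtain ⟨rfl, hfg⟩ := Prod.ext_iff.mp (e.injective hj)
    exact hfg.symm
  have hinter : ∀ f g, #(graph f ∩ graph g) ≤ #{i | f i = g i} := fun f g => by
    rw [← card_map (point f)]
    refine card_le_card fun j hj => ?_
    obtain ⟨⟨i, -, rfl⟩, ⟨i', -, hi'⟩⟩ := And.imp mem_map.mp mem_map.mp (mem_inter.mp hj)
    obtain ⟨rfl, hfg⟩ := Prod.ext_iff.mp (e.injective hi')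
    exact mem_map_of_mem _ (mem_filter.mpr ⟨mem_univ _, hfg.symm⟩)
  refine ⟨F.image graph, ?_, ?_, ?_⟩
  · simp [graph]
  · simp only [coe_image]
    rintro _ ⟨f, hf, rfl⟩ _ ⟨g, hg, rfl⟩ hfg
    have := hF hf hg (ne_of_apply_ne graph hfg)
    have := hinter f g
    omega
  · rw [card_image_of_injective _ hgraph_inj, div_pow, div_le_iff₀ (by positivity)]
    have hchoose : t.choose ((t + 1) / 2) ≤ 4 ^ ((t + 1) / 2) :=
      calc t.choose ((t + 1) / 2) ≤ 2 ^ t := Nat.choose_le_two_pow _ _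
        _ ≤ 2 ^ (2 * ((t + 1) / 2)) := Nat.pow_le_pow_right two_pos (by omega)
        _ = 4 ^ ((t + 1) / 2) := by rw [pow_mul]; norm_num
    simp only [Fintype.card_fin] at hFcard
    exact_mod_cast hFcard.trans (Nat.mul_le_mul_left _ hchoose)

theorem sum_ite_mem_sub_ite_mem_sq {α : Type*} [Fintype α] [DecidableEq α] (S T : Finset α) :
    ∑ j, ((if j ∈ S then 1 else 0) - (if j ∈ T then 1 else 0) : ℝ) ^ 2
      = #S + #T - 2 * #(S ∩ T) := by
  have hpt : ∀ j, ((if j ∈ S then 1 else 0) - (if j ∈ T then 1 else 0) : ℝ) ^ 2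
      = (if j ∈ S then 1 else 0) + (if j ∈ T then 1 else 0) - 2 * if j ∈ S ∩ T then 1 else 0 := by
    intro j
    by_cases hS : j ∈ S <;> by_cases hT : j ∈ T <;> simp [hS, hT, one_add_one_eq_two]
  simp only [hpt, sum_add_distrib, sum_sub_distrib, ← mul_sum, sum_boole, filter_mem_eq_inter,
    univ_inter]

theorem mul_log_div_le {s N : ℕ} (hs : 2 ≤ s) (hN : 5 * s < N) :
    (s : ℝ) * Real.log (N / s)
      ≤ 10 * ((s / 2 + 1) / 2 : ℕ) * Real.log ((N / (s / 2) : ℕ) / 4) := by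
  set t := s / 2
  set b := N / t
  have hsh : (s : ℝ) ≤ 5 * ((t + 1) / 2 : ℕ) := by
    exact_mod_cast (by omega : s ≤ 5 * ((t + 1) / 2))
  have hts : 2 * (t : ℝ) ≤ s := by exact_mod_cast (by omega : 2 * t ≤ s)
  have hNb : (N : ℝ) < t * (b + 1) := by exact_mod_cast Nat.lt_mul_div_succ N (by omega : 0 < t)
  have hsR : (0 : ℝ) < s := by positivity
  have hX : 5 < (N : ℝ) / s := by
    rw [lt_div_iff₀ hsR]
    exact_mod_cast hN
  have hXb : 2 * ((N : ℝ) / s) < b + 1 := by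
    rw [← mul_div_assoc, div_lt_iff₀ hsR]
    nlinarith
  -- `b ≥ 2X - 1` with `X = N / s > 5` forces `(b / 4)² ≥ X`
  have hlog : Real.log (N / s) ≤ 2 * Real.log (b / 4) := by
    calc Real.log (N / s) ≤ Real.log ((b / 4) ^ 2) := Real.log_le_log (by linarith) (by nlinarith)
      _ = 2 * Real.log (b / 4) := by rw [Real.log_pow, Nat.cast_ofNat]
  calc (s : ℝ) * Real.log (N / s)
      ≤ (5 * ((t + 1) / 2 : ℕ)) * (2 * Real.log (b / 4)) :=
        mul_le_mul hsh hlog (Real.log_nonneg (by linarith)) (by positivity)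
    _ = 10 * ((t + 1) / 2 : ℕ) * Real.log (b / 4) := by ring

section RIP

variable {n N s : ℕ} {δ : ℝ} {Φ : Fin n → Fin N → ℝ}

theorem normSqMulVec_eq_norm_sq (Φ : Fin n → Fin N → ℝ) (x : Fin N → ℝ) :
    normSqMulVec Φ x = ‖WithLp.toLp 2 (Matrix.of Φ *ᵥ x)‖ ^ 2 := by
  simp [normSqMulVec, EuclideanSpace.norm_sq_eq, mulVec, dotProduct]

theorem normSqMulVec_smul (Φ : Fin n → Fin N → ℝ) (c : ℝ) (x : Fin N → ℝ) :
    normSqMulVec Φ (c • x) = c ^ 2 * normSqMulVec Φ x := by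
  simp only [normSqMulVec_eq_norm_sq, Matrix.mulVec_smul, WithLp.toLp_smul, norm_smul, mul_pow,
    Real.norm_eq_abs, sq_abs]

theorem bddAbove_normSqMulVec_image_sparseUnitVecs (Φ : Fin n → Fin N → ℝ) :
    BddAbove (normSqMulVec Φ '' sparseUnitVecs N s) := by
  refine ⟨∑ i, ∑ j, Φ i j ^ 2, ?_⟩
  rintro _ ⟨x, hx, rfl⟩
  refine sum_le_sum fun i _ => ?_
  calc (∑ j, Φ i j * x j) ^ 2 ≤ (∑ j, Φ i j ^ 2) * ∑ j, x j ^ 2 := sum_mul_sq_le_sq_mul_sq _ _ _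
    _ = ∑ j, Φ i j ^ 2 := by rw [hx.1, mul_one]

theorem normSqMulVec_mem_Icc_of_ripConst_le (hΦ : ripConst n N s Φ ≤ δ) {x : Fin N → ℝ}
    (hx : x ∈ sparseUnitVecs N s) : normSqMulVec Φ x ∈ Set.Icc (1 - δ) (1 + δ) := by
  have hbdd : BddBelow (normSqMulVec Φ '' sparseUnitVecs N s) :=
    ⟨0, by rintro _ ⟨z, -, rfl⟩; exact sum_nonneg fun i _ => sq_nonneg _⟩
  have hsup := le_csSup (bddAbove_normSqMulVec_image_sparseUnitVecs Φ) ⟨x, hx, rfl⟩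
  have hinf := csInf_le hbdd ⟨x, hx, rfl⟩
  have := max_le_iff.mp hΦ
  unfold ripPlus ripMinus at this
  constructor <;> linarith

theorem normSqMulVec_mem_Icc_mul_of_ripConst_le (hΦ : ripConst n N s Φ ≤ δ) {x : Fin N → ℝ}
    (hx : #{j | x j ≠ 0} ≤ s) :
    normSqMulVec Φ x ∈ Set.Icc ((1 - δ) * ∑ j, x j ^ 2) ((1 + δ) * ∑ j, x j ^ 2) := by
  rcases (sum_nonneg fun j _ => sq_nonneg (x j) : 0 ≤ ∑ j, x j ^ 2).eq_or_lt with hq | hq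
  · have hx0 : x = 0 := funext fun j => pow_eq_zero_iff two_ne_zero |>.mp <|
      (sum_eq_zero_iff_of_nonneg fun j _ => sq_nonneg (x j)).mp hq.symm j (mem_univ j)
    simp [hx0, normSqMulVec]
  set q := ∑ j, x j ^ 2 with hq_def
  have hsq : √q ≠ 0 := (Real.sqrt_pos.mpr hq).ne'
  have hu : (√q)⁻¹ • x ∈ sparseUnitVecs N s := by
    refine ⟨?_, by simpa [hsq] using hx⟩
    simp only [Pi.smul_apply, smul_eq_mul, mul_pow, ← mul_sum, ← hq_def, inv_pow,
      Real.sq_sqrt hq.le]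
    exact inv_mul_cancel₀ hq.ne'
  have hx_eq : normSqMulVec Φ x = q * normSqMulVec Φ ((√q)⁻¹ • x) := by
    rw [normSqMulVec_smul, inv_pow, Real.sq_sqrt hq.le, mul_inv_cancel_left₀ hq.ne']
  obtain ⟨hlo, hhi⟩ := normSqMulVec_mem_Icc_of_ripConst_le hΦ hu
  rw [hx_eq]
  constructor <;> nlinarith

theorem card_le_of_ripConst_le (hδ : δ < 1) (hΦ : ripConst n N s Φ ≤ δ) {t : ℕ} (ht : 0 < t)
    (hts : 2 * t ≤ s) {𝒮 : Finset (Finset (Fin N))} (h𝒮 : ∀ S ∈ 𝒮, #S = t)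
    (hsep : (𝒮 : Set (Finset (Fin N))).Pairwise fun S T => 2 * #(S ∩ T) ≤ t) :
    (#𝒮 : ℝ) ≤ (2 * √2 / √(1 - δ) + 1) ^ n := by
  let v : Finset (Fin N) → Fin N → ℝ := fun S j => if j ∈ S then 1 else 0
  let y : Finset (Fin N) → EuclideanSpace ℝ (Fin n) := fun S => WithLp.toLp 2 (of Φ *ᵥ v S)
  have htR : (0 : ℝ) < t := Nat.cast_pos.mpr ht
  have hnorm : ∀ S ∈ 𝒮, ‖y S‖ ≤ √(2 * t) := by
    intro S hS
    have hsum : ∑ j, v S j ^ 2 = t := by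
      simp [v, h𝒮 S hS]
    have hsupp : #{j | v S j ≠ 0} ≤ s := by
      simp only [v, ne_eq, ite_eq_right_iff, one_ne_zero, imp_false, not_not, filter_mem_eq_inter,
        univ_inter, h𝒮 S hS]
      omega
    have hup := (normSqMulVec_mem_Icc_mul_of_ripConst_le hΦ hsupp).2
    rw [normSqMulVec_eq_norm_sq, hsum] at hup
    exact Real.le_sqrt_of_sq_le (by nlinarith)
  have hdist : (𝒮 : Set (Finset (Fin N))).Pairwise
      fun S T => √((1 - δ) * t) ≤ dist (y S) (y T) := by
    intro S hS T hT hST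
    have hsum : (t : ℝ) ≤ ∑ j, (v S - v T) j ^ 2 := by
      have := hsep hS hT hST
      have : (2 * #(S ∩ T) : ℝ) ≤ t := by exact_mod_cast this
      simp only [Pi.sub_apply, v, sum_ite_mem_sub_ite_mem_sq, h𝒮 S hS, h𝒮 T hT]
      linarith
    have hsupp : #{j | (v S - v T) j ≠ 0} ≤ s := by
      calc #{j | (v S - v T) j ≠ 0} ≤ #(S ∪ T) := by
            refine card_le_card fun j hj => ?_
            by_contra hjST
            simp_all [v]
        _ ≤ #S + #T := card_union_le S T
        _ ≤ s := by rw [h𝒮 S hS, h𝒮 T hT]; omega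
    have hlo := (normSqMulVec_mem_Icc_mul_of_ripConst_le hΦ hsupp).1
    rw [normSqMulVec_eq_norm_sq, mulVec_sub, WithLp.toLp_sub, ← dist_eq_norm] at hlo
    exact (Real.sqrt_le_left dist_nonneg).mpr (by nlinarith)
  have hK : 2 * √(2 * t) / √((1 - δ) * t) = 2 * √2 / √(1 - δ) := by
    have : √(t : ℝ) ≠ 0 := (Real.sqrt_pos.mpr htR).ne'
    rw [Real.sqrt_mul' _ htR.le, Real.sqrt_mul' _ htR.le]
    field_simp
  have hpack := card_le_of_pairwise_le_dist (Real.sqrt_pos.mpr (by nlinarith))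
    (Real.sqrt_nonneg _) hdist hnorm
  rwa [finrank_euclideanSpace_fin, hK] at hpack

theorem mul_log_div_le_of_ripConst_le (hδ : δ < 1) (hs : 2 ≤ s) (hN : 5 * s < N)
    (hΦ : ripConst n N s Φ ≤ δ) :
    (s : ℝ) * Real.log (N / s) ≤ 10 * Real.log (2 * √2 / √(1 - δ) + 1) * n := by
  obtain ⟨𝒮, hcard, hsep, hlarge⟩ := exists_finset_card_eq_pairwise_two_mul_card_inter_le
    (Nat.mul_div_le N (s / 2)) (Nat.div_pos (by omega) (by omega))
  have hupper := card_le_of_ripConst_le hδ hΦ (by omega) (by omega) hcard hsep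
  have hb : (1 : ℝ) < ((N / (s / 2) : ℕ) : ℝ) / 4 := by
    rw [lt_div_iff₀ four_pos, one_mul]
    exact_mod_cast (Nat.le_div_iff_mul_le (by omega)).mpr (by omega : 5 * (s / 2) ≤ N)
  have hlog := Real.log_le_log (by positivity) (hlarge.trans hupper)
  rw [Real.log_pow, Real.log_pow] at hlog
  linarith [mul_log_div_le hs hN]

end RIP

theorem minimal_number_of_measurements_general (δ₀ : ℝ) (hδ₀1 : δ₀ < 1) :
    ∃ c : ℝ, 0 < c ∧
      ∀ n N s : ℕ, 2 ≤ s → (s : ℝ) / N < 1 / 5 →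
        (1 / 2 : ENNReal) ≤
          gaussianMatrixMeasure n N
            {A | ripConst n N s (fun i j => A i j / Real.sqrt n) ≤ δ₀} →
        c * s * Real.log ((N : ℝ) / s) ≤ n := by
  have hL : 0 < Real.log (2 * √2 / √(1 - δ₀) + 1) :=
    Real.log_pos (lt_add_of_pos_left _ (div_pos (by positivity) (by simpa using hδ₀1)))
  refine ⟨1 / (10 * Real.log (2 * √2 / √(1 - δ₀) + 1)), by positivity, fun n N s hs hsN hμ => ?_⟩
  -- `s / 0 = 0` in `ℝ`, so `N = 0` is allowed; then `log (0 / s) = 0`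
  rcases N.eq_zero_or_pos with rfl | hNpos
  · simp
  have hN : 5 * s < N := by
    rw [div_lt_div_iff₀ (by positivity) (by norm_num)] at hsN
    exact_mod_cast (by linarith : (5 : ℝ) * s < N)
  obtain ⟨A, hA⟩ := nonempty_of_measure_ne_zero ((ENNReal.half_pos one_ne_zero).trans_le hμ).ne'
  have := mul_log_div_le_of_ripConst_le hδ₀1 hs hN hA
  rw [one_div, mul_assoc, inv_mul_le_iff₀ (by positivity)]
  linarith

/-- **Minimal number of Gaussian measurements.**  For every `δ₀ ∈ (0,1)` there is `c > 0` such
that for all `n, N, s` with `2 ≤ s` and `s/N < 1/5`: if a Gaussian `n × N` random matrix,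
normalized as `Φ = A/√n`, satisfies `δ_s(Φ) ≤ δ₀` with probability at least `1/2`, then
`n ≥ c · s · log(N/s)`. -/
theorem minimal_number_of_measurements (δ₀ : ℝ) (hδ₀ : 0 < δ₀) (hδ₀1 : δ₀ < 1) :
    ∃ c : ℝ, 0 < c ∧
      ∀ n N s : ℕ, 2 ≤ s → (s : ℝ) / N < 1 / 5 →
        (1 / 2 : ENNReal) ≤
          gaussianMatrixMeasure n N
            {A | ripConst n N s (fun i j => A i j / Real.sqrt n) ≤ δ₀} →
        c * s * Real.log ((N : ℝ) / s) ≤ n :=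
  minimal_number_of_measurements_general δ₀ hδ₀1
end

section
/- For 0 < α < 1 and δ > 0 with α + δ < 1 and δ < min(α, 1−α), the Kullback–Leibler divergence between Bernoulli(α) and Bernoulli(α+δ) satisfies D(α ‖ α+δ) = α·log(α/(α+δ)) + (1−α)·log((1−α)/(1−α−δ)) ≥ δ²·(1/α + 1/(1−α))·log(e/2). -/
/-!
Write `c = 1 - log 2 = log (e / 2)`. The function `t ↦ t - c t² - log (1 + t)` vanishes at `0` and
at `1`, and its derivative `t (1 - 2c (1 + t)) / (1 + t)` changes sign only at `0` and at
`1 / (2c) - 1 ∈ (0, 1)`; hence it is nonnegative on `(-1, 1]`, i.e. `log (1 + x) ≤ x - c x²` there.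
Applied to `x = δ / α` and `x = -δ / (1 - α)`, the two terms of the divergence are bounded below by
`c δ² / α - δ` and `c δ² / (1 - α) + δ`, whose sum is the claimed bound.
-/

open Real Set

noncomputable def logGap (c t : ℝ) : ℝ := t - c * t ^ 2 - log (1 + t)

section LogGap

variable (c : ℝ)

theorem hasDerivAt_logGap {t : ℝ} (ht : -1 < t) :
    HasDerivAt (logGap c) (t * (1 - 2 * c * (1 + t)) / (1 + t)) t := by
  have h1t : 1 + t ≠ 0 := by linarith
  have hlog : HasDerivAt (fun x => log (1 + x)) (1 / (1 + t)) t :=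
    ((hasDerivAt_id t).const_add 1).log h1t
  refine (((hasDerivAt_id t).sub ((hasDerivAt_pow 2 t).const_mul c)).sub hlog).congr_deriv ?_
  field_simp
  norm_num
  ring

theorem continuousOn_logGap : ContinuousOn (logGap c) (Ioi (-1)) :=
  fun _ ht => (hasDerivAt_logGap c ht).continuousAt.continuousWithinAt

variable {c} {D : Set ℝ} (hD : Convex ℝ D) (hD₁ : D ⊆ Ioi (-1))
include hD hD₁

theorem monotoneOn_logGap (hsign : ∀ t ∈ interior D, 0 ≤ t * (1 - 2 * c * (1 + t))) :
    MonotoneOn (logGap c) D :=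
  monotoneOn_of_hasDerivWithinAt_nonneg hD ((continuousOn_logGap c).mono hD₁)
    (fun _ ht => (hasDerivAt_logGap c (hD₁ (interior_subset ht))).hasDerivWithinAt)
    fun t ht => div_nonneg (hsign t ht) (neg_lt_iff_pos_add'.1 (hD₁ (interior_subset ht))).le

theorem antitoneOn_logGap (hsign : ∀ t ∈ interior D, t * (1 - 2 * c * (1 + t)) ≤ 0) :
    AntitoneOn (logGap c) D :=
  antitoneOn_of_hasDerivWithinAt_nonpos hD ((continuousOn_logGap c).mono hD₁)
    (fun _ ht => (hasDerivAt_logGap c (hD₁ (interior_subset ht))).hasDerivWithinAt)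
    fun t ht => div_nonpos_of_nonpos_of_nonneg (hsign t ht)
      (neg_lt_iff_pos_add'.1 (hD₁ (interior_subset ht))).le

end LogGap

theorem log_one_add_le_sub_mul_sq {x : ℝ} (hx₁ : -1 < x) (hx₂ : x ≤ 1) :
    log (1 + x) ≤ x - (1 - log 2) * x ^ 2 := by
  have hc₁ : 1 / 4 < 1 - log 2 := by linarith [log_two_lt_d9]
  have hc₂ : 1 - log 2 < 1 / 2 := by linarith [log_two_gt_d9]
  generalize hc_def : 1 - log 2 = c at hc₁ hc₂ ⊢
  have hc : 0 < c := by linarith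
  -- the zero `m ∈ (0, 1)` of the derivative of `logGap c` besides `0`
  obtain ⟨m, hm⟩ : ∃ m, 2 * c * (1 + m) = 1 := ⟨1 / (2 * c) - 1, by field_simp; ring⟩
  have hm₀ : 0 < m := by nlinarith
  have hm₁ : m < 1 := by nlinarith
  have hsign (t : ℝ) : 1 - 2 * c * (1 + t) = 2 * c * (m - t) := by linear_combination -hm
  suffices 0 ≤ logGap c x by unfold logGap at this; linarith
  have hzero : logGap c 0 = 0 := by simp [logGap]
  have hone : logGap c 1 = 0 := by norm_num [logGap, ← hc_def]
  rcases le_or_gt x 0 with hx₀ | hx₀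
  · have hanti : AntitoneOn (logGap c) (Ioc (-1) 0) :=
      antitoneOn_logGap (convex_Ioc _ _) Ioc_subset_Ioi_self fun t ht => by
        rw [interior_Ioc] at ht
        rw [hsign]
        nlinarith [mul_pos hc (mul_pos (neg_pos.2 ht.2) (show 0 < m - t by linarith [ht.2]))]
    simpa [hzero] using hanti ⟨hx₁, hx₀⟩ ⟨neg_one_lt_zero, le_rfl⟩ hx₀
  rcases le_total x m with hxm | hxm
  · have hmono : MonotoneOn (logGap c) (Icc 0 m) :=
      monotoneOn_logGap (convex_Icc _ _) ((Icc_subset_Ioi_iff hm₀.le).2 neg_one_lt_zero)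
        fun t ht => by
          rw [interior_Icc] at ht
          rw [hsign]
          nlinarith [mul_pos hc (mul_pos ht.1 (show 0 < m - t by linarith [ht.2]))]
    simpa [hzero] using hmono ⟨le_rfl, hm₀.le⟩ ⟨hx₀.le, hxm⟩ hx₀.le
  · have hanti : AntitoneOn (logGap c) (Icc m 1) :=
      antitoneOn_logGap (convex_Icc _ _) ((Icc_subset_Ioi_iff hm₁.le).2 (by linarith))
        fun t ht => by
          rw [interior_Icc] at ht
          rw [hsign]
          nlinarith [mul_pos hc (mul_pos (hm₀.trans ht.1) (show 0 < t - m by linarith [ht.1]))]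
    simpa [hone] using hanti ⟨hxm, hx₂⟩ ⟨hm₁.le, le_rfl⟩ hx₂

theorem sub_le_mul_log_div_add {p d : ℝ} (hp : 0 < p) (hd₁ : -p < d) (hd₂ : d ≤ p) :
    (1 - log 2) * d ^ 2 / p - d ≤ p * log (p / (p + d)) := by
  have hx₁ : -1 < d / p := by rwa [lt_div_iff₀ hp, neg_one_mul]
  have hx₂ : d / p ≤ 1 := (div_le_one hp).2 hd₂
  have hlog : log (p / (p + d)) = -log (1 + d / p) := by
    rw [← log_inv]
    congr 1
    field_simp
  calc (1 - log 2) * d ^ 2 / p - d = -p * (d / p - (1 - log 2) * (d / p) ^ 2) := by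
        field_simp
        ring
    _ ≤ -p * log (1 + d / p) :=
        mul_le_mul_of_nonpos_left (log_one_add_le_sub_mul_sq hx₁ hx₂) (neg_nonpos.2 hp.le)
    _ = p * log (p / (p + d)) := by rw [hlog]; ring

theorem bernoulli_kl_lower_bound_general (α δ : ℝ) (hα0 : 0 < α) (hδ : 0 < δ)
    (hδmin : δ < min α (1 - α)) :
    δ ^ 2 * (1 / α + 1 / (1 - α)) * Real.log (Real.exp 1 / 2) ≤
      α * Real.log (α / (α + δ)) + (1 - α) * Real.log ((1 - α) / (1 - α - δ)) := by
  have hδα : δ < α := hδmin.trans_le (min_le_left _ _)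
  have hδα' : δ < 1 - α := hδmin.trans_le (min_le_right _ _)
  have hα1 : 0 < 1 - α := hδ.trans hδα'
  have hfirst := sub_le_mul_log_div_add hα0 (by linarith) hδα.le
  have hsecond := sub_le_mul_log_div_add (d := -δ) hα1 (by linarith) (by linarith)
  rw [neg_sq, sub_neg_eq_add, ← sub_eq_add_neg] at hsecond
  have hbound : δ ^ 2 * (1 / α + 1 / (1 - α)) * log (exp 1 / 2) =
      ((1 - log 2) * δ ^ 2 / α - δ) + ((1 - log 2) * δ ^ 2 / (1 - α) + δ) := by
    rw [log_div (exp_ne_zero 1) two_ne_zero, log_exp]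
    ring
  linarith

/-- **Lower bound for the Bernoulli Kullback–Leibler divergence.**  For `0 < α < 1`, `δ > 0`
with `α + δ < 1` and `δ < min(α, 1 − α)`,
`D(α ‖ α+δ) = α log(α/(α+δ)) + (1−α) log((1−α)/(1−α−δ)) ≥ δ²(1/α + 1/(1−α)) log(e/2)`. -/
theorem bernoulli_kl_lower_bound (α δ : ℝ) (hα0 : 0 < α) (hα1 : α < 1) (hδ : 0 < δ)
    (hαδ : α + δ < 1) (hδmin : δ < min α (1 - α)) :
    δ ^ 2 * (1 / α + 1 / (1 - α)) * Real.log (Real.exp 1 / 2) ≤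
      α * Real.log (α / (α + δ)) + (1 - α) * Real.log ((1 - α) / (1 - α - δ)) :=
  bernoulli_kl_lower_bound_general α δ hα0 hδ hδmin
end

section
/- For every real x with −1 < x < 1, the inequality log(1 + x) ≤ x − (log(e/2))·x² holds. -/
/-!
With `c = log (e/2) = 1 - log 2`, the gap `x - c x² - log (1 + x)` vanishes at `0` and at `1`.
Three classical upper bounds for `log (1 + x)` each close it on part of `(-1, 1)`:
the Padé bound `2x/(x+2)` for `x ≤ 0`, the bound `log y ≤ sinh (log y) = (y - y⁻¹)/2` for
`0 ≤ x ≤ 1/(2c) - 1`, and the tangent line of `log` at `2` for `1/(2c) - 1 ≤ x ≤ 1`.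
The last two ranges meet at `2c(1 + x) = 1`, where both of their algebraic comparisons are
equalities.
-/

namespace Real

lemma log_one_add_le_two_mul_div_of_nonpos {x : ℝ} (h₁ : -1 < x) (h₀ : x ≤ 0) :
    log (1 + x) ≤ 2 * x / (x + 2) := by
  have hx : 0 < 1 + x := by linarith
  -- apply the lower bound for `log (1 + t)`, `t ≥ 0`, to `1 + t = (1 + x)⁻¹`
  have key := le_log_one_add_of_nonneg (x := -x / (1 + x)) (div_nonneg (by linarith) hx.le)
  have hinv : 1 + -x / (1 + x) = (1 + x)⁻¹ := by field_simp; ring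
  have hpade : 2 * (-x / (1 + x)) / (-x / (1 + x) + 2) = -(2 * x / (x + 2)) := by
    field_simp
    ring
  rw [hinv, log_inv, hpade] at key
  linarith

lemma log_le_sub_inv_div_two {y : ℝ} (hy : 1 ≤ y) : log y ≤ (y - y⁻¹) / 2 :=
  sinh_log (by linarith) ▸ self_le_sinh_iff.2 (log_nonneg hy)

lemma log_le_log_add_div_sub_one {a y : ℝ} (ha : 0 < a) (hy : 0 < y) :
    log y ≤ log a + y / a - 1 := by
  have := log_le_sub_one_of_pos (div_pos hy ha)
  rw [log_div hy.ne' ha.ne'] at this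
  linarith

end Real

open Real

lemma log_one_add_le_sub_mul_sq_of_nonpos {c x : ℝ} (hc : c ≤ 1 / 2) (h₁ : -1 < x)
    (h₀ : x ≤ 0) : log (1 + x) ≤ x - c * x ^ 2 := by
  have hx : 0 < x + 2 := by linarith
  calc log (1 + x) ≤ 2 * x / (x + 2) := log_one_add_le_two_mul_div_of_nonpos h₁ h₀
    _ ≤ x - c * x ^ 2 := by
      rw [div_le_iff₀ hx]
      have hcx : c * (x + 2) ≤ 1 := by nlinarith
      nlinarith [mul_nonneg (sq_nonneg x) (sub_nonneg.2 hcx)]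

lemma log_one_add_le_sub_mul_sq_of_nonneg {c x : ℝ} (h₀ : 0 ≤ x)
    (hx : 2 * c * (1 + x) ≤ 1) : log (1 + x) ≤ x - c * x ^ 2 := by
  have hpos : 0 < 1 + x := by linarith
  calc log (1 + x) ≤ ((1 + x) - (1 + x)⁻¹) / 2 := log_le_sub_inv_div_two (by linarith)
    _ ≤ x - c * x ^ 2 := by
      rw [← sub_nonneg]
      have hgap : x - c * x ^ 2 - ((1 + x) - (1 + x)⁻¹) / 2
          = x ^ 2 * (1 - 2 * c * (1 + x)) / (2 * (1 + x)) := by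
        field_simp
        ring
      rw [hgap]
      exact div_nonneg (mul_nonneg (sq_nonneg x) (by linarith)) (by linarith)

lemma log_one_add_le_sub_one_sub_log_two_mul_sq {x : ℝ} (hx : 1 ≤ 2 * (1 - log 2) * (1 + x))
    (h₂ : x ≤ 1) : log (1 + x) ≤ x - (1 - log 2) * x ^ 2 := by
  have hpos : 0 < 1 + x := by
    have : 0 < 1 - log 2 := by linarith [log_two_lt_d9]
    nlinarith
  calc log (1 + x) ≤ log 2 + (1 + x) / 2 - 1 := log_le_log_add_div_sub_one two_pos hpos
    _ ≤ x - (1 - log 2) * x ^ 2 := by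
      nlinarith [mul_nonneg (sub_nonneg.2 h₂) (sub_nonneg.2 hx)]

/-- **Elementary logarithm inequality.**  For `−1 < x < 1`,
`log(1 + x) ≤ x − log(e/2)·x²`. -/
theorem log_one_add_le (x : ℝ) (h₁ : -1 < x) (h₂ : x < 1) :
    Real.log (1 + x) ≤ x - Real.log (Real.exp 1 / 2) * x ^ 2 := by
  rw [log_div (exp_ne_zero 1) two_ne_zero, log_exp]
  rcases le_total x 0 with h₀ | h₀
  · exact log_one_add_le_sub_mul_sq_of_nonpos (by linarith [log_two_gt_d9]) h₁ h₀
  rcases le_total (2 * (1 - log 2) * (1 + x)) 1 with hx | hx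
  · exact log_one_add_le_sub_mul_sq_of_nonneg h₀ hx
  · exact log_one_add_le_sub_one_sub_log_two_mul_sq hx h₂.le
end

section
/- Let X² be a χ²₁ random variable (X standard Gaussian) with density f(x) = (2πx)^{−1/2}·e^{−x/2} on (0,∞). Then for every s > 0: (i) ∫_s^∞ x·f(x) dx = √(2s/π)·e^{−s/2} + ∫_s^∞ f(x) dx, and (ii) E(X² | X² > s) = s / E(√(s/(s+Y))) + 1, where Y is an exponential random variable with rate 1/2 (i.e. density (1/2)e^{−y/2} on (0,∞)). In particular E(X² | X² > s) > s. -/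
/-!
`-(2 / √(2π)) √x e^{-x/2}` is an antiderivative of `(x - 1) f(x)`, which gives (i). The shift
`x = s + y` turns `E√(s/(s+Y))` into `√(πs/2) e^{s/2} ∫_s^∞ f`, and (ii) follows from (i).
The final inequality holds for any density positive on `(s, ∞)`, since `∫_s^∞ (x - s) f > 0`.
-/

open MeasureTheory

/-- The density of the χ²₁ distribution: `f(x) = (2πx)^{-1/2} e^{-x/2}` for `x > 0`. -/
noncomputable def chiSq1Density (x : ℝ) : ℝ :=
  Real.exp (-x / 2) / Real.sqrt (2 * Real.pi * x)

open Set Filter Real Topology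

theorem setIntegral_pos_of_forall_pos {X : Type*} [MeasurableSpace X] {μ : Measure X}
    {S : Set X} {f : X → ℝ} (hS : MeasurableSet S) (hμS : μ S ≠ 0) (hf : IntegrableOn f S μ)
    (hpos : ∀ x ∈ S, 0 < f x) : 0 < ∫ x in S, f x ∂μ := by
  have hsupp : S ⊆ Function.support f := fun x hx => (hpos x hx).ne'
  rw [setIntegral_pos_iff_support_of_nonneg_ae
    ((ae_restrict_iff' hS).2 (ae_of_all _ fun x hx => (hpos x hx).le)) hf,
    inter_eq_right.2 hsupp]
  exact pos_iff_ne_zero.2 hμS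

theorem self_lt_integral_Ioi_mul_div_integral_Ioi {g : ℝ → ℝ} {s : ℝ}
    (hg : IntegrableOn g (Ioi s)) (hxg : IntegrableOn (fun x => x * g x) (Ioi s))
    (hpos : ∀ x ∈ Ioi s, 0 < g x) :
    s < (∫ x in Ioi s, x * g x) / ∫ x in Ioi s, g x := by
  have hvol : volume (Ioi s) ≠ 0 := by simp
  have hexcess : 0 < ∫ x in Ioi s, (x * g x - s * g x) :=
    setIntegral_pos_of_forall_pos measurableSet_Ioi hvol (hxg.sub (hg.const_mul s))
      fun x hx => by rw [← sub_mul]; exact mul_pos (sub_pos.2 hx) (hpos x hx)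
  rw [integral_sub hxg (hg.const_mul s), integral_const_mul, sub_pos] at hexcess
  rwa [lt_div_iff₀ (setIntegral_pos_of_forall_pos measurableSet_Ioi hvol hg hpos)]

theorem integral_Ioi_comp_const_add {E : Type*} [NormedAddCommGroup E] [NormedSpace ℝ E]
    (f : ℝ → E) (a b : ℝ) : ∫ y in Ioi a, f (b + y) = ∫ x in Ioi (b + a), f x := by
  rw [← (measurePreserving_add_left volume b).setIntegral_preimage_emb
    (measurableEmbedding_addLeft b) f (Ioi (b + a)), preimage_const_add_Ioi, add_sub_cancel_left]

theorem chiSq1Density_pos {x : ℝ} (hx : 0 < x) : 0 < chiSq1Density x := by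
  unfold chiSq1Density; positivity

-- `√` of a negative number is `0`, and so is division by `0`.
theorem chiSq1Density_of_nonpos {x : ℝ} (hx : x ≤ 0) : chiSq1Density x = 0 := by
  rw [chiSq1Density, sqrt_eq_zero'.2 (mul_nonpos_of_nonneg_of_nonpos (by positivity) hx),
    div_zero]

theorem integrable_rpow_mul_chiSq1Density {a : ℝ} (ha : -1 / 2 < a) :
    Integrable (fun x => x ^ a * chiSq1Density x) := by
  have hpos : IntegrableOn (fun x => x ^ a * chiSq1Density x) (Ioi 0) := by
    refine IntegrableOn.congr_fun ((integrableOn_rpow_mul_exp_neg_mul_rpow (s := a - 1 / 2)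
      (by linarith) one_pos (by norm_num : (0 : ℝ) < 1 / 2)).const_mul (√(2 * π))⁻¹)
      (fun x hx => ?_) measurableSet_Ioi
    have hx : 0 < x := hx
    rw [chiSq1Density, sqrt_mul (by positivity : (0 : ℝ) ≤ 2 * π) x, sqrt_eq_rpow x,
      rpow_sub hx, rpow_one]
    field_simp
  have hnonpos : IntegrableOn (fun x => x ^ a * chiSq1Density x) (Iic 0) :=
    integrableOn_zero.congr_fun (fun x hx => by rw [chiSq1Density_of_nonpos hx, mul_zero])
      measurableSet_Iic
  rw [← integrableOn_univ, ← Iic_union_Ioi (a := 0)]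
  exact hnonpos.union hpos

theorem integrable_chiSq1Density : Integrable chiSq1Density := by
  simpa using integrable_rpow_mul_chiSq1Density (a := 0) (by norm_num)

theorem integrable_id_mul_chiSq1Density : Integrable (fun x => x * chiSq1Density x) := by
  simpa using integrable_rpow_mul_chiSq1Density (a := 1) (by norm_num)

theorem integrable_sub_one_mul_chiSq1Density :
    Integrable (fun x => (x - 1) * chiSq1Density x) := by
  simp_rw [sub_one_mul]
  exact integrable_id_mul_chiSq1Density.sub integrable_chiSq1Density

theorem hasDerivAt_sqrt_mul_exp_neg_half {x : ℝ} (hx : 0 < x) :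
    HasDerivAt (fun x => -(2 / √(2 * π)) * (√x * exp (-x / 2)))
      ((x - 1) * chiSq1Density x) x := by
  have hexp : HasDerivAt (fun x : ℝ => exp (-x / 2)) (exp (-x / 2) * (-1 / 2)) x :=
    ((hasDerivAt_neg x).div_const 2).exp
  refine (((hasDerivAt_sqrt hx.ne').mul hexp).const_mul (-(2 / √(2 * π)))).congr_deriv ?_
  have hsx : √x ≠ 0 := (sqrt_pos.2 hx).ne'
  rw [chiSq1Density, sqrt_mul (by positivity : (0 : ℝ) ≤ 2 * π) x]
  field_simp
  rw [sq_sqrt hx.le]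
  ring

theorem integral_Ioi_sub_one_mul_chiSq1Density {s : ℝ} (hs : 0 ≤ s) :
    ∫ x in Ioi s, (x - 1) * chiSq1Density x = √(2 * s / π) * exp (-s / 2) := by
  have hlim : Tendsto (fun x => -(2 / √(2 * π)) * (√x * exp (-x / 2))) atTop (𝓝 0) := by
    have h := (tendsto_rpow_mul_exp_neg_mul_atTop_nhds_zero (1 / 2) (1 / 2) one_half_pos).const_mul
      (-(2 / √(2 * π)))
    rw [mul_zero] at h
    refine h.congr' ((eventually_gt_atTop 0).mono fun x hx => ?_)
    dsimp only
    rw [sqrt_eq_rpow x]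
    ring_nf
  rw [integral_Ioi_of_hasDerivAt_of_tendsto (by fun_prop)
    (fun x hx => hasDerivAt_sqrt_mul_exp_neg_half (hs.trans_lt hx))
    integrable_sub_one_mul_chiSq1Density.integrableOn hlim]
  rw [zero_sub, neg_mul, neg_neg, ← mul_assoc]
  congr 1
  rw [← sqrt_sq (by positivity : 0 ≤ 2 / √(2 * π) * √s), mul_pow, div_pow,
    sq_sqrt (by positivity), sq_sqrt hs]
  field_simp

theorem integral_Ioi_mul_chiSq1Density {s : ℝ} (hs : 0 ≤ s) :
    ∫ x in Ioi s, x * chiSq1Density x =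
      √(2 * s / π) * exp (-s / 2) + ∫ x in Ioi s, chiSq1Density x := by
  rw [← integral_Ioi_sub_one_mul_chiSq1Density hs, ← integral_add
    integrable_sub_one_mul_chiSq1Density.integrableOn integrable_chiSq1Density.integrableOn]
  simp_rw [sub_one_mul, sub_add_cancel]

theorem integral_Ioi_sqrt_div_add_mul_exp_neg_half {s : ℝ} (hs : 0 ≤ s) :
    ∫ y in Ioi 0, √(s / (s + y)) * (1 / 2 * exp (-y / 2)) =
      √(π * s / 2) * exp (s / 2) * ∫ x in Ioi s, chiSq1Density x := by
  calc _ = ∫ y in Ioi 0, √(π * s / 2) * exp (s / 2) * chiSq1Density (s + y) := by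
        refine setIntegral_congr_fun measurableSet_Ioi fun y (hy : 0 < y) => ?_
        have hx : 0 < s + y := by positivity
        rw [chiSq1Density, sqrt_div' _ hx.le, sqrt_mul' _ hx.le, sqrt_div' _ two_pos.le,
          sqrt_mul pi_pos.le, sqrt_mul zero_le_two π,
          show -(s + y) / 2 = -y / 2 + -(s / 2) by ring, exp_add, exp_neg]
        have h2 : √2 ≠ 0 := by positivity
        have hx' : √(s + y) ≠ 0 := by positivity
        field_simp
        rw [sq_sqrt zero_le_two]
    _ = _ := by
      rw [integral_Ioi_comp_const_add (fun x => √(π * s / 2) * exp (s / 2) * chiSq1Density x),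
        add_zero, integral_const_mul]

/-- **Conditional mean of χ²₁ above a level (eq. (24) of the paper).**  For every `s > 0`:
(i) `∫_s^∞ x f(x) dx = √(2s/π) e^{-s/2} + ∫_s^∞ f(x) dx`;
(ii) `E(X² | X² > s) = s / E√(s/(s+Y)) + 1` where `Y ~ Exp(1/2)`;
in particular `E(X² | X² > s) > s`. -/
theorem chiSq1_conditional_mean (s : ℝ) (hs : 0 < s) :
    (∫ x in Set.Ioi s, x * chiSq1Density x) =
        Real.sqrt (2 * s / Real.pi) * Real.exp (-s / 2) +
          ∫ x in Set.Ioi s, chiSq1Density x ∧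
    (∫ x in Set.Ioi s, x * chiSq1Density x) / (∫ x in Set.Ioi s, chiSq1Density x) =
        s / (∫ y in Set.Ioi (0 : ℝ), Real.sqrt (s / (s + y)) * (1 / 2 * Real.exp (-y / 2)))
          + 1 ∧
    s < (∫ x in Set.Ioi s, x * chiSq1Density x) / (∫ x in Set.Ioi s, chiSq1Density x) := by
  have hdens : ∀ x ∈ Ioi s, 0 < chiSq1Density x := fun x hx => chiSq1Density_pos (hs.trans hx)
  have htail : 0 < ∫ x in Ioi s, chiSq1Density x :=
    setIntegral_pos_of_forall_pos measurableSet_Ioi (by simp)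
      integrable_chiSq1Density.integrableOn hdens
  have hmean := integral_Ioi_mul_chiSq1Density hs.le
  have hcoef : s / (√(π * s / 2) * exp (s / 2)) = √(2 * s / π) * exp (-s / 2) := by
    have hsqrt : s / √(π * s / 2) = √(2 * s / π) := by
      rw [div_eq_iff (by positivity), ← sqrt_mul (by positivity),
        show 2 * s / π * (π * s / 2) = s ^ 2 by field_simp, sqrt_sq hs.le]
    rw [← div_div, hsqrt, div_eq_mul_inv, ← exp_neg, neg_div]
  refine ⟨hmean, ?_, self_lt_integral_Ioi_mul_div_integral_Ioi
    integrable_chiSq1Density.integrableOn integrable_id_mul_chiSq1Density.integrableOn hdens⟩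
  rw [integral_Ioi_sqrt_div_add_mul_exp_neg_half hs.le, ← div_div, hcoef, hmean, add_div,
    div_self htail.ne']
end
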